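/- A bounded Hankel operator on l²(X₊) has no bounded left inverse. -/

import Mathlib

/-!
Since `Γ e_χ (ξ) = a (χ ξ) = (Γ e_1) (χ ξ)`, the vector `Γ e_χ` is `Γ e_1` read along the cone
`χ X₊`, so `‖Γ e_χ‖²` is bounded by a tail of the convergent series `‖Γ e_1‖²` and tends to `0`
as `χ → ∞`; that the cones `χ X₊` eventually avoid every point is where `X` being nontrivial
enters. A bounded left inverse `L` would instead force `1 = ‖e_χ‖ ≤ ‖L‖ ‖Γ e_χ‖`.
-/

open Filter Topology

theorem tendsto_tsum_comp_zero_of_eventually_notMem_range {α ι κ : Type*} {l : Filter ι}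
    {f : α → ℝ} (hf : Summable f) (hf₀ : ∀ a, 0 ≤ f a) {g : ι → κ → α}
    (hg : ∀ i, Function.Injective (g i)) (hl : ∀ a, ∀ᶠ i in l, a ∉ Set.range (g i)) :
    Tendsto (fun i => ∑' k, f (g i k)) l (𝓝 0) := by
  refine tendsto_order.2 ⟨fun ε hε => Eventually.of_forall fun i =>
    hε.trans_le (tsum_nonneg fun k => hf₀ _), fun ε hε => ?_⟩
  obtain ⟨s, hs⟩ := ((tendsto_order.1 (tendsto_tsum_compl_atTop_zero f)).2 ε hε).exists
  filter_upwards [(eventually_all_finset s).2 fun a _ => hl a] with i hi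
  let g' : κ → {a // a ∉ s} := fun k => ⟨g i k, fun h => hi _ h ⟨k, rfl⟩⟩
  have hg' : Function.Injective g' := fun k k' h => hg i (congrArg Subtype.val h)
  calc ∑' k, f (g i k) = ∑' k, (f ∘ Subtype.val) (g' k) := rfl
    _ ≤ ∑' b : {a // a ∉ s}, f b := tsum_comp_le_tsum_of_inj (hf.subtype _) (fun b => hf₀ b.1) hg'
    _ < ε := hs

theorem lp.tendsto_norm_zero_of_comp {α ι κ E : Type*} [NormedAddCommGroup E]
    {p : ENNReal} (hp : 0 < p.toReal) {l : Filter ι} (w : lp (fun _ : α => E) p)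
    {v : ι → lp (fun _ : κ => E) p} {g : ι → κ → α} (hv : ∀ i k, v i k = w (g i k))
    (hg : ∀ i, Function.Injective (g i)) (hl : ∀ a, ∀ᶠ i in l, a ∉ Set.range (g i)) :
    Tendsto (fun i => ‖v i‖) l (𝓝 0) := by
  have hsum : Tendsto (fun i => ∑' k, ‖w (g i k)‖ ^ p.toReal) l (𝓝 0) :=
    tendsto_tsum_comp_zero_of_eventually_notMem_range ((lp.memℓp w).summable hp)
      (fun a => by positivity) hg hl
  have := hsum.rpow_const (p := 1 / p.toReal) (Or.inr (by positivity))
  rw [Real.zero_rpow (by positivity)] at this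
  simpa only [lp.norm_eq_tsum_rpow hp, hv] using this

theorem ContinuousLinearMap.tendsto_norm_zero_of_comp_eq_id {𝕜 E F ι : Type*}
    [NontriviallyNormedField 𝕜] [SeminormedAddCommGroup E] [SeminormedAddCommGroup F]
    [NormedSpace 𝕜 E] [NormedSpace 𝕜 F] {T : E →L[𝕜] F} {L : F →L[𝕜] E}
    (hL : L.comp T = ContinuousLinearMap.id 𝕜 E) {l : Filter ι} {u : ι → E}
    (hTu : Tendsto (fun i => ‖T (u i)‖) l (𝓝 0)) :
    Tendsto (fun i => ‖u i‖) l (𝓝 0) := by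
  have hle : ∀ i, ‖u i‖ ≤ ‖L‖ * ‖T (u i)‖ := fun i => by
    simpa [← ContinuousLinearMap.comp_apply, hL] using L.le_opNorm (T (u i))
  simpa using squeeze_zero (fun i => norm_nonneg _) hle (by simpa using hTu.const_mul ‖L‖)

section PositiveCone

variable {X : Type*} [CommGroup X] [LinearOrder X] [IsOrderedMonoid X]

local notation "X₊" => {χ : X // 1 ≤ χ}

def posConeMul (χ ξ : X₊) : X₊ := ⟨χ * ξ, one_le_mul χ.2 ξ.2⟩

theorem posConeMul_injective (χ : X₊) : Function.Injective (posConeMul χ) :=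
  fun _ _ h => Subtype.ext (mul_left_cancel (congrArg Subtype.val h))

theorem eventually_notMem_range_posConeMul [Nontrivial X] (η : X₊) :
    ∀ᶠ χ in atTop, η ∉ Set.range (posConeMul χ) := by
  obtain ⟨g, hg⟩ := exists_one_lt' (α := X)
  filter_upwards [eventually_ge_atTop (⟨η * g, one_le_mul η.2 hg.le⟩ : X₊)]
    with χ hχ ⟨ξ, hξ⟩
  have : (η : X) < η := calc
    (η : X) < η * g := lt_mul_of_one_lt_right' _ hg
    _ ≤ χ := hχ
    _ ≤ χ * ξ := le_mul_of_one_le_right' ξ.2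
    _ = η := congrArg Subtype.val hξ
  exact this.false

end PositiveCone

/-- A bounded Hankel operator on `l²(X₊)` has no bounded left inverse. -/
theorem stmt_4 {X : Type*} [CommGroup X] [LinearOrder X] [IsOrderedMonoid X] [Nontrivial X]
    (Γ : lp (fun _ : {χ : X // 1 ≤ χ} => ℂ) 2 →L[ℂ] lp (fun _ : {χ : X // 1 ≤ χ} => ℂ) 2)
    (a : X → ℂ)
    (hΓ : ∀ χ ξ : {χ : X // 1 ≤ χ},
      (Γ (lp.single 2 χ (1 : ℂ))) ξ = a ((χ : X) * (ξ : X))) :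
    ¬ ∃ L : lp (fun _ : {χ : X // 1 ≤ χ} => ℂ) 2 →L[ℂ] lp (fun _ : {χ : X // 1 ≤ χ} => ℂ) 2,
      L.comp Γ = ContinuousLinearMap.id ℂ (lp (fun _ : {χ : X // 1 ≤ χ} => ℂ) 2) := by
  rintro ⟨L, hL⟩
  let e : {χ : X // 1 ≤ χ} → lp (fun _ : {χ : X // 1 ≤ χ} => ℂ) 2 := fun χ => lp.single 2 χ 1
  have hshift : ∀ χ ξ, Γ (e χ) ξ = Γ (e ⟨1, le_rfl⟩) (posConeMul χ ξ) := fun χ ξ => by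
    simp only [e, hΓ, posConeMul, one_mul]
  have hdecay : Tendsto (fun χ => ‖Γ (e χ)‖) atTop (𝓝 0) :=
    lp.tendsto_norm_zero_of_comp (by norm_num) _ hshift posConeMul_injective
      eventually_notMem_range_posConeMul
  have hunit := ContinuousLinearMap.tendsto_norm_zero_of_comp_eq_id hL hdecay
  have : Nonempty {χ : X // 1 ≤ χ} := ⟨⟨1, le_rfl⟩⟩
  simp only [e, lp.norm_single two_pos, norm_one] at hunit
  exact one_ne_zero (tendsto_nhds_unique tendsto_const_nhds hunit)
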